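/- Let H be Hermitian on ℂⁿ = X ⊕ X⊥ with blocks [[A, B],[B*, C]]. Suppose A has orthonormal eigenpairs (λ̃_n, ũ_n), 1 ≤ n ≤ dim X, with λ̃₁ ≤ … arranged increasingly, and let μ ∈ (λ̃_N, λ̃_{N+1}). Then for any M with N+1 ≤ M ≤ dim X, the Schur complement satisfies, as quadratic forms on X⊥: S_μ ≥ (C − μ) − Σ_{n=N+1}^{M−1} (B* ũ_n)(B* ũ_n)†/(λ̃_n − μ) − ‖B‖²/(λ̃_M − μ) − Σ_{n=1}^{N} (B* ũ_n)(B* ũ_n)†/(λ̃_n − μ). -/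

import Mathlib

open Matrix

/-- The matrix-vector product, viewed as a map between Euclidean spaces. -/
noncomputable def mulVecE {m n : ℕ} (B : Matrix (Fin m) (Fin n) ℂ)
    (x : EuclideanSpace ℂ (Fin n)) : EuclideanSpace ℂ (Fin m) :=
  WithLp.toLp 2 (B.mulVec x)

lemma mulVecE_adjoint {m n : ℕ} (B : Matrix (Fin m) (Fin n) ℂ)
    (u : EuclideanSpace ℂ (Fin m)) (w : EuclideanSpace ℂ (Fin n)) :
    (inner ℂ (mulVecE Bᴴ u) w : ℂ) = inner ℂ u (mulVecE B w) := by
  simp only [mulVecE, WithLp.ofLp_toLp, PiLp.toLp_apply, PiLp.inner_apply, RCLike.inner_apply, mulVec, dotProduct,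
    conjTranspose_apply, map_sum, _root_.map_mul, Finset.sum_mul, Finset.mul_sum]
  rw [Finset.sum_comm]
  refine Finset.sum_congr rfl fun i _ => Finset.sum_congr rfl fun j _ => ?_
  simp only [starRingEnd_apply, star_star]
  ring

lemma mulVecE_smul {m n : ℕ} (B : Matrix (Fin m) (Fin n) ℂ) (c : ℂ)
    (x : EuclideanSpace ℂ (Fin n)) : mulVecE B (c • x) = c • mulVecE B x := by
  simp [mulVecE, Matrix.mulVec_smul]

lemma mulVecE_sum {m n : ℕ} (B : Matrix (Fin m) (Fin n) ℂ) {ι : Type*} (s : Finset ι)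
    (f : ι → EuclideanSpace ℂ (Fin n)) :
    mulVecE B (∑ i ∈ s, f i) = ∑ i ∈ s, mulVecE B (f i) :=
  by simp [mulVecE, WithLp.ofLp_sum, Matrix.mulVec_sum, WithLp.toLp_sum]
/-- **Lower bound on the Schur complement via a partial spectral decomposition.**
Let `H = [[A, B], [Bᴴ, C]]` be Hermitian, let `(λ̃_n, ũ_n)` be the orthonormal
eigenpairs of `A` sorted increasingly (`0`-based indices: the 1-based index `n`
corresponds to `i = n - 1`), and let `μ ∈ (λ̃_N, λ̃_{N+1})`.  Then for `N + 1 ≤ M ≤ dim X`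
the Schur complement `S_μ = (C − μ) − Bᴴ(A − μ)⁻¹B` satisfies, in the sense of quadratic
forms on `X⊥`,
`S_μ ≥ (C − μ) − Σ_{n=N+1}^{M−1} (Bᴴũ_n)(Bᴴũ_n)†/(λ̃_n − μ) − ‖B‖²/(λ̃_M − μ)
       − Σ_{n=1}^{N} (Bᴴũ_n)(Bᴴũ_n)†/(λ̃_n − μ)`. -/
theorem schur_complement_spectral_lower_bound (p k : ℕ)
    (A : Matrix (Fin p) (Fin p) ℂ) (B : Matrix (Fin p) (Fin k) ℂ)
    (C : Matrix (Fin k) (Fin k) ℂ) (hA : A.IsHermitian) (hC : C.IsHermitian)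
    (utld : Fin p → EuclideanSpace ℂ (Fin p)) (lam : Fin p → ℝ)
    (hortho : Orthonormal ℂ utld)
    (heig : ∀ i, mulVecE A (utld i) = (lam i : ℂ) • utld i)
    (hmono : Monotone lam)
    (N M : ℕ) (hNM : N + 1 ≤ M) (hMp : M ≤ p) (hNp : N < p)
    (μ : ℝ)
    (hμ₁ : ∀ i : Fin p, (i : ℕ) < N → lam i < μ)
    (hμ₂ : μ < lam ⟨N, hNp⟩)
    (opB : ℝ)
    (hopB : ∀ x : EuclideanSpace ℂ (Fin k), ‖mulVecE B x‖ ≤ opB * ‖x‖)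
    (S : Matrix (Fin k) (Fin k) ℂ)
    (hS : S = (C - (μ : ℂ) • (1 : Matrix (Fin k) (Fin k) ℂ)) -
      Bᴴ * (A - (μ : ℂ) • (1 : Matrix (Fin p) (Fin p) ℂ))⁻¹ * B) :
    ∀ w : EuclideanSpace ℂ (Fin k),
      (inner ℂ w (mulVecE (C - (μ : ℂ) • (1 : Matrix (Fin k) (Fin k) ℂ)) w) : ℂ).re
        - ∑ i ∈ Finset.univ.filter (fun i : Fin p => N ≤ (i : ℕ) ∧ (i : ℕ) < M - 1),
            ‖(inner ℂ (mulVecE Bᴴ (utld i)) w : ℂ)‖ ^ 2 / (lam i - μ)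
        - opB ^ 2 * ‖w‖ ^ 2 / (lam ⟨M - 1, by omega⟩ - μ)
        - ∑ i ∈ Finset.univ.filter (fun i : Fin p => (i : ℕ) < N),
            ‖(inner ℂ (mulVecE Bᴴ (utld i)) w : ℂ)‖ ^ 2 / (lam i - μ)
      ≤ (inner ℂ w (mulVecE S w) : ℂ).re := by
  classical
  intro w
  haveI : Nonempty (Fin p) := ⟨⟨N, hNp⟩⟩
  set A' : Matrix (Fin p) (Fin p) ℂ := A - (μ : ℂ) • 1 with hA'
  set v : EuclideanSpace ℂ (Fin p) := mulVecE B w with hv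
  -- positivity facts
  have hpos : ∀ i : Fin p, N ≤ (i : ℕ) → 0 < lam i - μ := by
    intro i hi
    have : lam ⟨N, hNp⟩ ≤ lam i := hmono (by exact hi)
    linarith
  have hne : ∀ i : Fin p, lam i - μ ≠ 0 := by
    intro i
    rcases lt_or_ge (i : ℕ) N with h | h
    · have := hμ₁ i h; intro hc; linarith
    · exact (hpos i h).ne'
  have hneC : ∀ i : Fin p, ((lam i - μ : ℝ) : ℂ) ≠ 0 := by
    intro i; exact_mod_cast Complex.ofReal_ne_zero.2 (hne i)
  -- eigen-equation for A'
  have heig' : ∀ i, mulVecE A' (utld i) = ((lam i - μ : ℝ) : ℂ) • utld i := by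
    intro i
    have h0 := heig i
    simp only [mulVecE] at h0 ⊢
    rw [hA', Matrix.sub_mulVec, WithLp.toLp_sub, h0, Matrix.smul_mulVec, Matrix.one_mulVec,
      WithLp.toLp_smul, WithLp.toLp_ofLp]
    push_cast
    rw [sub_smul]
  -- A' is invertible
  -- orthonormal basis (needed early for surjectivity)
  have hcard0 : Fintype.card (Fin p) = Module.finrank ℂ (EuclideanSpace ℂ (Fin p)) := by
    simp
  let b0 : Module.Basis (Fin p) ℂ (EuclideanSpace ℂ (Fin p)) :=
    basisOfOrthonormalOfCardEqFinrank hortho hcard0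
  have hb0 : ⇑b0 = utld := coe_basisOfOrthonormalOfCardEqFinrank hortho hcard0
  let ob0 : OrthonormalBasis (Fin p) ℂ (EuclideanSpace ℂ (Fin p)) :=
    b0.toOrthonormalBasis (by rwa [hb0])
  have hob0 : ⇑ob0 = utld := by
    rw [show ⇑ob0 = ⇑b0 from Module.Basis.coe_toOrthonormalBasis b0 _, hb0]
  have hunit : IsUnit A' := by
    rw [← Matrix.mulVec_surjective_iff_isUnit]
    intro y
    refine ⟨WithLp.ofLp (∑ i, (((lam i - μ : ℝ) : ℂ)⁻¹ *
      inner ℂ (utld i) (WithLp.toLp 2 y)) • utld i : EuclideanSpace ℂ (Fin p)), ?_⟩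
    apply WithLp.toLp_injective 2
    show mulVecE A' _ = (WithLp.toLp 2 y)
    rw [mulVecE_sum]
    have hterm : ∀ i : Fin p, mulVecE A' ((((lam i - μ : ℝ) : ℂ)⁻¹ *
        inner ℂ (utld i) (WithLp.toLp 2 y)) • utld i)
        = (inner ℂ (utld i) (WithLp.toLp 2 y) : ℂ) • utld i := by
      intro i
      rw [mulVecE_smul, heig' i, smul_smul]
      congr 1
      rw [mul_comm, ← mul_assoc, mul_inv_cancel₀ (hneC i), one_mul]
    rw [Finset.sum_congr rfl fun i _ => hterm i]
    have := ob0.sum_repr' (WithLp.toLp 2 y)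
    simpa [hob0] using this
  have hdet : IsUnit A'.det := (Matrix.isUnit_iff_isUnit_det A').1 hunit
  set c : Fin p → ℂ := fun i => inner ℂ (utld i) v with hc
  -- inverse acts on eigenvectors
  have hinvcancel : ∀ z : EuclideanSpace ℂ (Fin p), mulVecE A'⁻¹ (mulVecE A' z) = z := by
    intro z
    show WithLp.toLp 2 (A'⁻¹.mulVec (A'.mulVec z.ofLp)) = z
    rw [Matrix.mulVec_mulVec, Matrix.nonsing_inv_mul _ hdet, Matrix.one_mulVec]
  have hinv : ∀ i, mulVecE A'⁻¹ (utld i) = ((lam i - μ : ℝ) : ℂ)⁻¹ • utld i := by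
    intro i
    have h1 : mulVecE A' (((lam i - μ : ℝ) : ℂ)⁻¹ • utld i) = utld i := by
      rw [mulVecE_smul, heig' i, smul_smul, inv_mul_cancel₀ (hneC i), one_smul]
    conv_lhs => rw [← h1, hinvcancel]
  -- expansion of v
  have hrepr : v = ∑ i, c i • utld i := by
    conv_lhs => rw [← ob0.sum_repr' v]
    simp [hob0, hc]
  -- Parseval
  have hpars : ∑ i, ‖c i‖ ^ 2 = ‖v‖ ^ 2 := by
    have h1 : ∀ i, c i = ob0.repr v i := by
      intro i; rw [ob0.repr_apply_apply, hob0]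
    have h2 : ‖v‖ = ‖ob0.repr v‖ := (ob0.repr.norm_map v).symm
    rw [h2, EuclideanSpace.norm_eq, Real.sq_sqrt (by positivity)]
    exact Finset.sum_congr rfl fun i _ => by rw [h1 i]
  -- the quadratic form of the inverse
  have hq : (inner ℂ v (mulVecE A'⁻¹ v) : ℂ).re = ∑ i, ‖c i‖ ^ 2 / (lam i - μ) := by
    have h1 : mulVecE A'⁻¹ v = ∑ i, (c i * ((lam i - μ : ℝ) : ℂ)⁻¹) • utld i := by
      conv_lhs => rw [hrepr]
      rw [mulVecE_sum]
      exact Finset.sum_congr rfl fun i _ => by rw [mulVecE_smul, hinv i, smul_smul]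
    have h2 : (inner ℂ v (mulVecE A'⁻¹ v) : ℂ)
        = ∑ i, (c i * ((lam i - μ : ℝ) : ℂ)⁻¹) * (starRingEnd ℂ) (c i) := by
      rw [h1, inner_sum]
      refine Finset.sum_congr rfl fun i _ => ?_
      rw [inner_smul_right]
      congr 1
      rw [← inner_conj_symm]
    have h3 : ∀ i : Fin p, (c i * ((lam i - μ : ℝ) : ℂ)⁻¹) * (starRingEnd ℂ) (c i)
        = ((‖c i‖ ^ 2 / (lam i - μ) : ℝ) : ℂ) := by
      intro i
      rw [mul_comm (c i), mul_assoc, Complex.mul_conj, Complex.normSq_eq_norm_sq]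
      push_cast
      ring
    rw [h2, Finset.sum_congr rfl fun i _ => h3 i, ← Complex.ofReal_sum, Complex.ofReal_re]
  -- the adjoint relation
  have hadj : ∀ i, (inner ℂ (mulVecE Bᴴ (utld i)) w : ℂ) = c i := by
    intro i; rw [mulVecE_adjoint, hc]
  -- the Schur quadratic form identity
  have hSw : (inner ℂ w (mulVecE S w) : ℂ).re
      = (inner ℂ w (mulVecE (C - (μ : ℂ) • (1 : Matrix (Fin k) (Fin k) ℂ)) w) : ℂ).re
        - ∑ i, ‖c i‖ ^ 2 / (lam i - μ) := by
    have e1 : mulVecE S w = mulVecE (C - (μ : ℂ) • (1 : Matrix (Fin k) (Fin k) ℂ)) w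
        - mulVecE Bᴴ (mulVecE A'⁻¹ v) := by
      show WithLp.toLp 2 (S.mulVec w.ofLp) = WithLp.toLp 2 ((C - (μ : ℂ) • 1).mulVec w.ofLp)
        - WithLp.toLp 2 (Bᴴ.mulVec (A'⁻¹.mulVec (B.mulVec w.ofLp)))
      rw [hS, Matrix.sub_mulVec, WithLp.toLp_sub]
      congr 1
      rw [Matrix.mulVec_mulVec, Matrix.mulVec_mulVec, Matrix.mul_assoc]
    have e2 : (inner ℂ w (mulVecE Bᴴ (mulVecE A'⁻¹ v)) : ℂ)
        = inner ℂ v (mulVecE A'⁻¹ v) := by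
      rw [← inner_conj_symm, mulVecE_adjoint, inner_conj_symm, hv]
    rw [e1, inner_sub_right, e2, Complex.sub_re, hq]
  rw [hSw]
  simp only [hadj]
  -- now pure real-arithmetic inequality
  have hsub3 : 0 < lam ⟨M - 1, by omega⟩ - μ := hpos ⟨M - 1, by omega⟩ (by simp; omega)
  have htail : ∑ i ∈ Finset.univ.filter
        (fun i : Fin p => ¬ (i : ℕ) < N ∧ ¬ (i : ℕ) < M - 1), ‖c i‖ ^ 2 / (lam i - μ)
      ≤ opB ^ 2 * ‖w‖ ^ 2 / (lam ⟨M - 1, by omega⟩ - μ) := by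
    have step1 : ∑ i ∈ Finset.univ.filter
          (fun i : Fin p => ¬ (i : ℕ) < N ∧ ¬ (i : ℕ) < M - 1), ‖c i‖ ^ 2 / (lam i - μ)
        ≤ ∑ i ∈ Finset.univ.filter
          (fun i : Fin p => ¬ (i : ℕ) < N ∧ ¬ (i : ℕ) < M - 1),
            ‖c i‖ ^ 2 / (lam ⟨M - 1, by omega⟩ - μ) := by
      refine Finset.sum_le_sum fun i hi => ?_
      simp only [Finset.mem_filter, Finset.mem_univ, true_and] at hi
      have hle : lam ⟨M - 1, by omega⟩ ≤ lam i := by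
        refine hmono ?_
        simp only [Fin.le_def]
        omega
      gcongr
    have step2 : ∑ i ∈ Finset.univ.filter
          (fun i : Fin p => ¬ (i : ℕ) < N ∧ ¬ (i : ℕ) < M - 1),
            ‖c i‖ ^ 2 / (lam ⟨M - 1, by omega⟩ - μ)
        ≤ ‖v‖ ^ 2 / (lam ⟨M - 1, by omega⟩ - μ) := by
      rw [← Finset.sum_div, ← hpars]
      apply (div_le_div_iff_of_pos_right hsub3).mpr
      exact Finset.sum_le_sum_of_subset_of_nonneg (Finset.filter_subset _ _)
        (fun i _ _ => by positivity)
    have step3 : ‖v‖ ^ 2 / (lam ⟨M - 1, by omega⟩ - μ)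
        ≤ opB ^ 2 * ‖w‖ ^ 2 / (lam ⟨M - 1, by omega⟩ - μ) := by
      gcongr
      nlinarith [hopB w, norm_nonneg (mulVecE B w), norm_nonneg w]
    linarith
  have hsplitA := Finset.sum_filter_add_sum_filter_not Finset.univ
    (fun i : Fin p => (i : ℕ) < N) (fun i => ‖c i‖ ^ 2 / (lam i - μ))
  have hsplitB := Finset.sum_filter_add_sum_filter_not
    (Finset.univ.filter (fun i : Fin p => ¬ (i : ℕ) < N))
    (fun i : Fin p => (i : ℕ) < M - 1) (fun i => ‖c i‖ ^ 2 / (lam i - μ))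
  rw [Finset.filter_filter, Finset.filter_filter] at hsplitB
  have hseq : Finset.univ.filter (fun i : Fin p => ¬ (i : ℕ) < N ∧ (i : ℕ) < M - 1)
      = Finset.univ.filter (fun i : Fin p => N ≤ (i : ℕ) ∧ (i : ℕ) < M - 1) := by
    apply Finset.filter_congr
    intro i _
    simp only [not_lt]
  rw [hseq] at hsplitB
  linarith
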